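/- arXiv:1911.09589 — 5 statements merged into one kernel-verified Lean document; each statement's English description precedes it below -/
import Mathlib

section
/- Let d be a positive integer and let ζ := e^{2πi/d}. In the field of rational functions ℂ(X), one has the identity ∏_{j=0}^{d-1} (1 − ζ^j X)^{a_d(j)} = ∏_{b ∣ d} (1 − X^{d/b})^{b·μ(d/b)}, where both products use integer (possibly negative) exponents. -/
/-!
Since `1 - X ^ (d / b) = ∏_{j < d, b ∣ j} (1 - ζ ^ j X)` for `b ∣ d`, the right-hand side
equals `∏_{j < d} (1 - ζ ^ j X) ^ (∑_{b ∣ d, b ∣ j} b μ(d / b))`. So the identity reduces to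
Hölder's formula `a_d(j) = ∑_{b ∣ d, b ∣ j} b μ(d / b)` for the Ramanujan sum. Both sides of
that formula are multiplicative in `d`, so it suffices to compare them on prime powers, which
is a direct computation.
-/

open Finset

/-- The Ramanujan sum `a_d(j) = μ(d/gcd(d,j)) · φ(d)/φ(d/gcd(d,j)) ∈ ℤ`. -/
def ramanujanCoeff (d : ℕ) (j : ℤ) : ℤ :=
  ArithmeticFunction.moebius (d / Int.gcd d j) *
    (Nat.totient d / Nat.totient (d / Int.gcd d j) : ℕ)

open ArithmeticFunction
open scoped ArithmeticFunction.Moebius Nat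

theorem ArithmeticFunction.mul_moebius_apply_prime_pow_succ {R : Type*} [CommRing R]
    (f : ArithmeticFunction R) {p : ℕ} (hp : p.Prime) (i : ℕ) :
    (f * (μ : ArithmeticFunction R)) (p ^ (i + 1)) = f (p ^ (i + 1)) - f (p ^ i) := by
  rw [mul_comm, mul_apply]
  simp only [intCoe_apply]
  rw [Nat.sum_divisorsAntidiagonal (fun a b => (μ a : R) * f b),
    Nat.sum_divisors_prime_pow hp, sum_range_succ', sum_range_succ']
  have hvanish :
      ∀ t ∈ range i, (μ (p ^ (t + 1 + 1)) : R) * f (p ^ (i + 1) / p ^ (t + 1 + 1)) = 0 :=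
    fun t _ => by
      rw [moebius_apply_prime_pow hp (by omega), if_neg (by omega), Int.cast_zero, zero_mul]
  rw [sum_eq_zero hvanish, Nat.pow_div (by omega) hp.pos, Nat.pow_div (by omega) hp.pos,
    zero_add, pow_one, pow_zero, moebius_apply_prime hp, moebius_apply_one, Nat.add_sub_cancel,
    Nat.sub_zero]
  push_cast
  ring

def idOnDivisors (j : ℕ) : ArithmeticFunction ℤ :=
  ⟨fun k => if k ∣ j then k else 0, by simp⟩

theorem idOnDivisors_apply (j k : ℕ) : idOnDivisors j k = if k ∣ j then (k : ℤ) else 0 := rfl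

theorem isMultiplicative_idOnDivisors (j : ℕ) : (idOnDivisors j).IsMultiplicative := by
  refine ⟨by simp [idOnDivisors_apply], fun {m n} hmn => ?_⟩
  have hdvd : m * n ∣ j ↔ m ∣ j ∧ n ∣ j :=
    ⟨fun h => ⟨(dvd_mul_right m n).trans h, (dvd_mul_left n m).trans h⟩,
      fun h => hmn.mul_dvd_of_dvd_of_dvd h.1 h.2⟩
  simp only [idOnDivisors_apply, hdvd]
  split_ifs <;> simp_all

theorem ramanujanCoeff_natCast (d j : ℕ) :
    ramanujanCoeff d j = μ (d / d.gcd j) * (φ d / φ (d / d.gcd j) : ℕ) := by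
  rw [ramanujanCoeff, Int.gcd_natCast_natCast]

theorem ramanujanCoeff_mul_of_coprime {m n : ℕ} (hmn : m.Coprime n) (j : ℕ) :
    ramanujanCoeff (m * n : ℕ) j = ramanujanCoeff m j * ramanujanCoeff n j := by
  simp only [ramanujanCoeff_natCast]
  have hgm := Nat.gcd_dvd_left m j
  have hgn := Nat.gcd_dvd_left n j
  have hquot : m * n / (m * n).gcd j = m / m.gcd j * (n / n.gcd j) := by
    rw [Nat.gcd_comm, Nat.Coprime.gcd_mul j hmn, Nat.gcd_comm j, Nat.gcd_comm j,
      Nat.div_mul_div_comm hgm hgn]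
  have hquot_coprime : (m / m.gcd j).Coprime (n / n.gcd j) :=
    hmn.coprime_div_left hgm |>.coprime_div_right hgn
  rw [hquot, isMultiplicative_moebius.map_mul_of_coprime hquot_coprime,
    Nat.totient_mul hmn, Nat.totient_mul hquot_coprime,
    ← Nat.div_mul_div_comm (Nat.totient_dvd_of_dvd (Nat.div_dvd_of_dvd hgm))
      (Nat.totient_dvd_of_dvd (Nat.div_dvd_of_dvd hgn))]
  push_cast
  ring

theorem ramanujanCoeff_prime_pow_succ {p : ℕ} (hp : p.Prime) (i j : ℕ) :
    ramanujanCoeff (p ^ (i + 1) : ℕ) j =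
      idOnDivisors j (p ^ (i + 1)) - idOnDivisors j (p ^ i) := by
  obtain ⟨s, hs, hgcd⟩ := (Nat.dvd_prime_pow hp).mp (Nat.gcd_dvd_left (p ^ (i + 1)) j)
  have hdvd : ∀ t ≤ i + 1, p ^ t ∣ j ↔ t ≤ s := fun t ht => by
    rw [← Nat.pow_dvd_pow_iff_le_right hp.one_lt, ← hgcd, Nat.dvd_gcd_iff]
    exact (and_iff_right (pow_dvd_pow p ht)).symm
  rw [ramanujanCoeff_natCast, hgcd, Nat.pow_div hs hp.pos, idOnDivisors_apply,
    idOnDivisors_apply, if_congr (hdvd _ le_rfl) rfl rfl, if_congr (hdvd i (by omega)) rfl rfl]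
  rcases (show s = i + 1 ∨ s = i ∨ s < i by omega) with rfl | rfl | hsi
  · simp [Nat.totient_prime_pow hp, Nat.cast_sub hp.one_le]
    ring
  · simp [Nat.totient_prime_pow hp, Nat.totient_prime hp, moebius_apply_prime hp,
      Nat.mul_div_cancel _ (Nat.sub_pos_of_lt hp.one_lt)]
  · rw [moebius_apply_prime_pow hp (by omega), if_neg (by omega), if_neg (by omega),
      if_neg (by omega)]
    simp

def ramanujanSum (j : ℕ) : ArithmeticFunction ℤ :=
  ⟨fun d => ramanujanCoeff d j, by simp [ramanujanCoeff_natCast]⟩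

theorem isMultiplicative_ramanujanSum (j : ℕ) : (ramanujanSum j).IsMultiplicative :=
  ⟨by simp [ramanujanSum, ramanujanCoeff_natCast],
    fun hmn => by simpa [ramanujanSum] using ramanujanCoeff_mul_of_coprime hmn j⟩

theorem ramanujanSum_eq_idOnDivisors_mul_moebius (j : ℕ) :
    ramanujanSum j = idOnDivisors j * (μ : ArithmeticFunction ℤ) := by
  refine (IsMultiplicative.eq_iff_eq_on_prime_powers _ (isMultiplicative_ramanujanSum j) _
    ((isMultiplicative_idOnDivisors j).mul isMultiplicative_moebius)).mpr fun p i hp => ?_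
  cases i with
  | zero => simp [ramanujanSum, ramanujanCoeff_natCast, idOnDivisors_apply]
  | succ i =>
    rw [← intCoe_int μ, mul_moebius_apply_prime_pow_succ _ hp]
    exact ramanujanCoeff_prime_pow_succ hp i j

theorem ramanujanCoeff_eq_sum_divisors (d j : ℕ) :
    ramanujanCoeff d j = ∑ k ∈ d.divisors with k ∣ j, (k : ℤ) * μ (d / k) := by
  change ramanujanSum j d = _
  rw [ramanujanSum_eq_idOnDivisors_mul_moebius, mul_apply,
    Nat.sum_divisorsAntidiagonal (fun a b => idOnDivisors j a * (μ : ArithmeticFunction ℤ) b),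
    sum_filter]
  simp [idOnDivisors_apply]

theorem IsPrimitiveRoot.pow_sub_pow_eq_prod_range {R : Type*} [CommRing R] [IsDomain R] {ζ : R}
    {n : ℕ} (hζ : IsPrimitiveRoot ζ n) (hn : 0 < n) (x y : R) :
    x ^ n - y ^ n = ∏ i ∈ range n, (x - ζ ^ i * y) := by
  simpa [Polynomial.eval_prod] using
    congrArg (Polynomial.eval x) (X_pow_sub_C_eq_prod hζ hn (rfl : y ^ n = y ^ n))

theorem prod_range_mul_filter_dvd {M : Type*} [CommMonoid M] (f : ℕ → M) {b m : ℕ}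
    (hb : 0 < b) :
    ∏ j ∈ range (b * m) with b ∣ j, f j = ∏ i ∈ range m, f (b * i) := by
  refine prod_nbij' (· / b) (b * ·) ?_ ?_ ?_ ?_ ?_ <;> simp only [mem_filter, mem_range]
  · rintro _ ⟨hj, i, rfl⟩
    rw [Nat.mul_div_cancel_left i hb]
    exact Nat.lt_of_mul_lt_mul_left hj
  · exact fun i hi => ⟨Nat.mul_lt_mul_of_pos_left hi hb, dvd_mul_right b i⟩
  · rintro _ ⟨-, i, rfl⟩
    rw [Nat.mul_div_cancel_left i hb]
  · exact fun i _ => Nat.mul_div_cancel_left i hb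
  · rintro _ ⟨-, i, rfl⟩
    rw [Nat.mul_div_cancel_left i hb]

theorem IsPrimitiveRoot.prod_range_filter_dvd {R : Type*} [CommRing R] [IsDomain R] {ζ : R}
    {n b : ℕ} (hζ : IsPrimitiveRoot ζ n) (hb : b ∈ n.divisors) (x y : R) :
    ∏ j ∈ range n with b ∣ j, (x - ζ ^ j * y) = x ^ (n / b) - y ^ (n / b) := by
  obtain ⟨⟨m, rfl⟩, hn⟩ := Nat.mem_divisors.mp hb
  have hb0 : 0 < b := Nat.pos_of_mem_divisors hb
  rw [Nat.mul_div_cancel_left m hb0, prod_range_mul_filter_dvd _ hb0,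
    (hζ.pow (Nat.pos_of_ne_zero hn) rfl).pow_sub_pow_eq_prod_range
      (Nat.pos_of_ne_zero (right_ne_zero_of_mul hn))]
  simp_rw [pow_mul]

theorem zpow_sum₀ {ι G₀ : Type*} [CommGroupWithZero G₀] {x : G₀} (hx : x ≠ 0) (s : Finset ι)
    (e : ι → ℤ) : x ^ (∑ i ∈ s, e i) = ∏ i ∈ s, x ^ e i := by
  classical
  induction s using Finset.induction_on with
  | empty => simp
  | insert a s ha ih => rw [sum_insert ha, prod_insert ha, zpow_add₀ hx, ih]

theorem RatFunc.one_sub_C_mul_X_ne_zero {K : Type*} [Field K] (c : K) :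
    (1 - RatFunc.C c * RatFunc.X : RatFunc K) ≠ 0 := by
  have hpoly : (1 - Polynomial.C c * Polynomial.X : Polynomial K) ≠ 0 := fun h => by
    simpa using congrArg (Polynomial.eval 0) h
  simpa using RatFunc.algebraMap_ne_zero hpoly

/-- For a positive integer `d` and `ζ = e^{2πi/d}`, in `ℂ(X)` one has
`∏_{j=0}^{d-1} (1 − ζ^j X)^{a_d(j)} = ∏_{b ∣ d} (1 − X^{d/b})^{b·μ(d/b)}`. -/
theorem prod_one_sub_zeta_pow_ramanujanCoeff (d : ℕ) (hd : 0 < d)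
    (ζ : ℂ) (hζ : ζ = Complex.exp (2 * Real.pi * Complex.I / d)) :
    ∏ j ∈ Finset.range d,
        (1 - RatFunc.C (ζ ^ j) * RatFunc.X : RatFunc ℂ) ^ (ramanujanCoeff d j)
      = ∏ b ∈ d.divisors,
          (1 - RatFunc.X ^ (d / b) : RatFunc ℂ) ^ ((b : ℤ) * ArithmeticFunction.moebius (d / b)) := by
  have hprim : IsPrimitiveRoot (RatFunc.C ζ : RatFunc ℂ) d :=
    (hζ ▸ Complex.isPrimitiveRoot_exp d hd.ne').map_of_injective RatFunc.C_injective
  calc ∏ j ∈ range d, (1 - RatFunc.C (ζ ^ j) * RatFunc.X : RatFunc ℂ) ^ (ramanujanCoeff d j)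
      = ∏ j ∈ range d, ∏ b ∈ d.divisors with b ∣ j,
          (1 - RatFunc.C (ζ ^ j) * RatFunc.X : RatFunc ℂ) ^ ((b : ℤ) * μ (d / b)) :=
        prod_congr rfl fun j _ => by
          rw [ramanujanCoeff_eq_sum_divisors, zpow_sum₀ (RatFunc.one_sub_C_mul_X_ne_zero _)]
    _ = ∏ b ∈ d.divisors, ∏ j ∈ range d with b ∣ j,
          (1 - RatFunc.C (ζ ^ j) * RatFunc.X : RatFunc ℂ) ^ ((b : ℤ) * μ (d / b)) :=
        prod_comm' fun j b => by simp only [mem_filter]; tauto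
    _ = _ := prod_congr rfl fun b hb => by
        simp_rw [prod_zpow, map_pow, hprim.prod_range_filter_dvd hb, one_pow]
end

section
/- For all positive integers n and d with n dividing d, one has (∑_{b ∣ n} b·μ(d/b)) · φ(d/n) = μ(d/n) · φ(d), where μ is the Möbius function and φ is Euler's totient function. Equivalently, ∑_{b ∣ n} b·μ(d/b) = μ(d/n) · φ(d)/φ(d/n). -/
/-!
Write `d = n m` and substitute `b = n / c`: the sum becomes `∑_{c ∣ n} (n / c) μ(m c)`.
Induct on the prime factorisation of `m`. For `m = 1` the identity is `φ = μ * id`, the Möbius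
inversion of `∑_{c ∣ n} φ c = n`. A prime `p ∣ m` makes `μ(p m c)` and `μ(p m)` vanish. If `p ∤ m`,
write `n = p^a n'` with `p ∤ n'`; only divisors prime to `p` contribute, so the sum for `(n, p m)`
is `-p^a` times the sum for `(n', m)`, matching `μ(p m) = -μ(m)` and `φ(n p m) = p^a φ(p) φ(n' m)`.
-/

open Finset ArithmeticFunction
open scoped Nat ArithmeticFunction.Moebius

theorem moebius_prime_mul_of_dvd {p k : ℕ} (hp : p.Prime) (h : p ∣ k) : μ (p * k) = 0 :=
  moebius_eq_zero_of_not_squarefree fun hsq => hp.not_isUnit (hsq p (mul_dvd_mul_left p h))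

theorem moebius_prime_mul_of_not_dvd {p k : ℕ} (hp : p.Prime) (h : ¬p ∣ k) :
    μ (p * k) = -μ k := by
  rw [isMultiplicative_moebius.map_mul_of_coprime (hp.coprime_iff_not_dvd.2 h),
    moebius_apply_prime hp, neg_one_mul]

theorem totient_eq_sum_div_mul_moebius (n : ℕ) :
    (φ n : ℤ) = ∑ c ∈ n.divisors, ((n / c : ℕ) : ℤ) * μ c := by
  rcases n.eq_zero_or_pos with rfl | hn
  · simp
  have h := (sum_eq_iff_sum_mul_moebius_eq (R := ℤ) (f := fun k => (φ k : ℤ))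
    (g := fun k => (k : ℤ))).1 (fun k _ => mod_cast Nat.sum_totient k) n hn
  simp only [Int.cast_id] at h
  rw [← h, Nat.sum_divisorsAntidiagonal (f := fun x y => (μ x : ℤ) * y)]
  exact sum_congr rfl fun c _ => by simp [mul_comm]

theorem sum_divisors_mul_moebius_div (n m : ℕ) :
    ∑ b ∈ n.divisors, (b : ℤ) * μ (n * m / b)
      = ∑ c ∈ n.divisors, ((n / c : ℕ) : ℤ) * μ (m * c) := by
  rw [← Nat.sum_div_divisors]
  refine sum_congr rfl fun c hc => ?_
  obtain ⟨⟨e, rfl⟩, hce⟩ := Nat.mem_divisors.1 hc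
  have he : 0 < e := Nat.pos_of_ne_zero (right_ne_zero_of_mul hce)
  have hc : 0 < c := Nat.pos_of_ne_zero (left_ne_zero_of_mul hce)
  rw [Nat.mul_div_cancel_left e hc, mul_comm c e, mul_assoc, Nat.mul_div_cancel_left _ he,
    mul_comm c m]

theorem sum_div_mul_moebius_prime_mul {p m n : ℕ} (a : ℕ) (hp : p.Prime) (hpm : ¬p ∣ m)
    (hpn : ¬p ∣ n) :
    ∑ c ∈ (p ^ a * n).divisors, ((p ^ a * n / c : ℕ) : ℤ) * μ (p * m * c)
      = -(p ^ a : ℤ) * ∑ c ∈ n.divisors, ((n / c : ℕ) : ℤ) * μ (m * c) := by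
  have hn : n ≠ 0 := by rintro rfl; exact hpn (dvd_zero p)
  have hpan : p ^ a * n ≠ 0 := mul_ne_zero (pow_ne_zero a hp.ne_zero) hn
  -- divisors of `p ^ a * n` outside `n.divisors` are multiples of `p`, and `μ` kills them
  rw [← sum_subset (Nat.divisors_subset_of_dvd hpan (dvd_mul_left n _)), mul_sum]
  · refine sum_congr rfl fun c hc => ?_
    have hcn := Nat.dvd_of_mem_divisors hc
    have hpmc : ¬p ∣ m * c := fun h =>
      (hp.dvd_mul.1 h).elim hpm fun hpc => hpn (hpc.trans hcn)
    rw [Nat.mul_div_assoc _ hcn, mul_assoc, moebius_prime_mul_of_not_dvd hp hpmc]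
    push_cast
    ring
  · intro c hc hcn
    have hpc : p ∣ c := by
      by_contra hpc
      have hcop := Nat.Coprime.pow_right a (hp.coprime_iff_not_dvd.2 hpc).symm
      exact hcn (Nat.mem_divisors.2 ⟨hcop.dvd_of_dvd_mul_left (Nat.dvd_of_mem_divisors hc), hn⟩)
    rw [mul_assoc, moebius_prime_mul_of_dvd hp (dvd_mul_of_dvd_right hpc m), mul_zero]

theorem totient_prime_pow_mul_prime_mul {p m n : ℕ} (a : ℕ) (hp : p.Prime) (hpm : ¬p ∣ m)
    (hpn : ¬p ∣ n) :
    φ (p ^ a * n * (p * m)) = p ^ a * φ p * φ (n * m) := by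
  have hcop : Nat.Coprime (p ^ (a + 1)) (n * m) :=
    Nat.Coprime.pow_left _ (Nat.Coprime.mul_right (hp.coprime_iff_not_dvd.2 hpn)
      (hp.coprime_iff_not_dvd.2 hpm))
  rw [show p ^ a * n * (p * m) = p ^ (a + 1) * (n * m) by ring, Nat.totient_mul hcop,
    Nat.totient_prime_pow_succ hp, Nat.totient_prime hp]

theorem sum_div_mul_moebius_mul_mul_totient (m n : ℕ) :
    (∑ c ∈ n.divisors, ((n / c : ℕ) : ℤ) * μ (m * c)) * φ m = μ m * φ (n * m) := by
  induction m using UniqueFactorizationMonoid.induction_on_prime generalizing n with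
  | h₁ => simp
  | h₂ u hu =>
    rw [Nat.isUnit_iff.1 hu]
    simp [totient_eq_sum_div_mul_moebius]
  | h₃ m p _ hp ih =>
    have hp : p.Prime := Nat.prime_iff.2 hp
    by_cases hpm : p ∣ m
    · simp [mul_assoc, moebius_prime_mul_of_dvd hp hpm,
        fun c => moebius_prime_mul_of_dvd hp (dvd_mul_of_dvd_left hpm c)]
    rcases eq_or_ne n 0 with rfl | hn
    · simp
    obtain ⟨a, n, hpn, rfl⟩ := Nat.exists_eq_pow_mul_and_not_dvd hn p hp.ne_one
    rw [sum_div_mul_moebius_prime_mul a hp hpm hpn, moebius_prime_mul_of_not_dvd hp hpm,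
      totient_prime_pow_mul_prime_mul a hp hpm hpn, Nat.totient_mul (hp.coprime_iff_not_dvd.2 hpm)]
    simp only [Nat.cast_mul, Nat.cast_pow]
    linear_combination -(p : ℤ) ^ a * φ p * ih n

theorem sum_mul_moebius_eq_general (n d : ℕ) (hn : 0 < n) (hnd : n ∣ d) :
    (∑ b ∈ n.divisors, (b : ℤ) * ArithmeticFunction.moebius (d / b)) *
        (Nat.totient (d / n) : ℤ)
      = ArithmeticFunction.moebius (d / n) * (Nat.totient d : ℤ) := by
  obtain ⟨m, rfl⟩ := hnd
  rw [sum_divisors_mul_moebius_div, Nat.mul_div_cancel_left m hn]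
  exact sum_div_mul_moebius_mul_mul_totient m n

/-- For positive integers `n ∣ d`:
`(∑_{b ∣ n} b·μ(d/b)) · φ(d/n) = μ(d/n) · φ(d)`. -/
theorem sum_mul_moebius_eq (n d : ℕ) (hn : 0 < n) (hd : 0 < d) (hnd : n ∣ d) :
    (∑ b ∈ n.divisors, (b : ℤ) * ArithmeticFunction.moebius (d / b)) *
        (Nat.totient (d / n) : ℤ)
      = ArithmeticFunction.moebius (d / n) * (Nat.totient d : ℤ) :=
  sum_mul_moebius_eq_general n d hn hnd
end

section
/- Let d be a positive divisor of 24 and let r, r' be integers coprime to d with r ≡ r' (mod d). Then r³ − r ≡ r'³ − r' (mod 2d). In other words, the residue of r³ − r modulo 2d is well defined for r in (ℤ/dℤ)ˣ when d divides 24. -/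
/-! Write `r'³ − r' − (r³ − r) = (r' − r)(r'² + r'r + r² − 1)`. The first factor is divisible
by `d`. If `d` is even, `r` and `r'` are odd and the second factor is even; if `d` is odd,
`2` and `d` are coprime and both `r³ − r` and `r'³ − r'` are even. -/

namespace Int

theorem even_cube_sub_self (x : ℤ) : Even (x ^ 3 - x) := by
  simp [even_sub, parity_simps]

theorem even_sq_add_mul_add_sq_sub_one {a b : ℤ} (ha : Odd a) (hb : Odd b) :
    Even (b ^ 2 + b * a + a ^ 2 - 1) := by
  simp [parity_simps, not_even_iff_odd.mpr ha, not_even_iff_odd.mpr hb]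

theorem ModEq.cube_sub_self_two_mul {d r r' : ℤ} (hr : IsCoprime r d) (h : r ≡ r' [ZMOD d]) :
    r ^ 3 - r ≡ r' ^ 3 - r' [ZMOD 2 * d] := by
  have hd : d ∣ r' - r := modEq_iff_dvd.mp h
  have hfactor : (r' ^ 3 - r') - (r ^ 3 - r) = (r' - r) * (r' ^ 2 + r' * r + r ^ 2 - 1) := by
    ring
  refine modEq_iff_dvd.mpr ?_
  rcases even_or_odd d with hd_even | hd_odd
  · have hr_odd : Odd r := isCoprime_two_right.mp (hr.of_isCoprime_of_dvd_right hd_even.two_dvd)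
    have hr'_odd : Odd r' := by
      simpa using hr_odd.add_even (even_iff_two_dvd.mpr (hd_even.two_dvd.trans hd))
    rw [hfactor, mul_comm 2 d]
    exact mul_dvd_mul hd (even_sq_add_mul_add_sq_sub_one hr_odd hr'_odd).two_dvd
  · refine (isCoprime_two_left.mpr hd_odd).mul_dvd ?_ ?_
    · exact ((even_cube_sub_self r').sub (even_cube_sub_self r)).two_dvd
    · exact hfactor ▸ hd.mul_right _

end Int

theorem cube_sub_self_well_defined_general (d : ℕ)
    (r r' : ℤ) (hr : Int.gcd r d = 1)
    (hcong : r ≡ r' [ZMOD (d : ℤ)]) :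
    r ^ 3 - r ≡ r' ^ 3 - r' [ZMOD (2 * d : ℤ)] :=
  hcong.cube_sub_self_two_mul (Int.isCoprime_iff_gcd_eq_one.mpr hr)

/-- Let `d` be a positive divisor of `24` and `r, r'` integers coprime to
`d` with `r ≡ r' (mod d)`. Then `r³ − r ≡ r'³ − r' (mod 2d)`. -/
theorem cube_sub_self_well_defined (d : ℕ) (hd : 0 < d) (hdvd : d ∣ 24)
    (r r' : ℤ) (hr : Int.gcd r d = 1) (hr' : Int.gcd r' d = 1)
    (hcong : r ≡ r' [ZMOD (d : ℤ)]) :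
    r ^ 3 - r ≡ r' ^ 3 - r' [ZMOD (2 * d : ℤ)] :=
  cube_sub_self_well_defined_general d r r' hr hcong
end

section
/- The congruence subgroup Γ₀(2) of SL₂(ℤ) is generated by the three elements T := [[1,1],[0,1]], −I, and TB := [[−1,1],[−2,1]]; that is, the subgroup of SL₂(ℤ) generated by these three matrices equals Γ₀(2). -/
open Matrix MatrixGroups CongruenceSubgroup

/-- The matrix `T = [[1,1],[0,1]]` in `SL(2, ℤ)`. -/
def Tz : SL(2, ℤ) := ⟨!![1, 1; 0, 1], by decide⟩

/-- The matrix `TB = T·(S T² S⁻¹) = [[−1,1],[−2,1]]` in `SL(2, ℤ)`. -/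
def TBz : SL(2, ℤ) := ⟨!![-1, 1; -2, 1], by decide⟩

/-- The matrix `−I` in `SL(2, ℤ)`. -/
def negIz : SL(2, ℤ) := ⟨!![-1, 0; 0, -1], by decide⟩

open ModularGroup

/-! Euclid's algorithm on the first column `(a, c)` of `g ∈ Γ₀(2)`: left multiplication by `T ^ n`
replaces `a` by `a + n c`, and by `S T² S⁻¹ = [[1, 0], [-2, 1]]` raised to `q` replaces `c` by
`c - 2 q a`. Since `c` is even and `det g = 1`, `a ≠ 0`, so taking centred remainders makes `|c|`
strictly smaller; at `c = 0` the matrix is `± T ^ b`. -/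

theorem Int.exists_two_mul_natAbs_sub_mul_le (x : ℤ) {y : ℤ} (hy : y ≠ 0) :
    ∃ q : ℤ, 2 * (x - q * y).natAbs ≤ y.natAbs := by
  have hm : 0 < y.natAbs := Int.natAbs_pos.2 hy
  obtain ⟨k, hk⟩ := Int.natAbs_dvd.1 (Int.dvd_bmod_sub_self (x := x) (m := y.natAbs))
  refine ⟨-k, ?_⟩
  have hr : x - -k * y = x.bmod y.natAbs := by linear_combination hk.symm
  have := Int.le_bmod (x := x) hm
  have := Int.bmod_lt (x := x) hm
  omega

theorem CongruenceSubgroup.mem_Gamma0_iff_dvd {N : ℕ} {A : SL(2, ℤ)} :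
    A ∈ Gamma0 N ↔ (N : ℤ) ∣ A 1 0 := by
  rw [Gamma0_mem, ZMod.intCast_zmod_eq_zero_iff_dvd]

theorem CongruenceSubgroup.apply_zero_zero_ne_zero_of_mem_Gamma0 {N : ℕ} (hN : N ≠ 1)
    {A : SL(2, ℤ)} (hA : A ∈ Gamma0 N) : A 0 0 ≠ 0 := by
  intro h0
  have hdet : A 0 0 * A 1 1 - A 0 1 * A 1 0 = 1 := by rw [← det_fin_two]; exact A.det_coe
  have hc : A 1 0 ∣ 1 := ⟨-A 0 1, by rw [h0] at hdet; linear_combination -hdet⟩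
  have : (N : ℤ) ∣ 1 := (mem_Gamma0_iff_dvd.1 hA).trans hc
  exact hN (by exact_mod_cast Int.eq_one_of_dvd_one (by positivity) this)

namespace ModularGroup

theorem eq_T_zpow_or_neg_T_zpow_of_apply_one_zero_eq_zero {g : SL(2, ℤ)} (hc : g 1 0 = 0) :
    g = T ^ g 0 1 ∨ g = -T ^ (-g 0 1) := by
  have had : g 0 0 * g 1 1 = 1 := by
    have := g.det_coe
    rw [det_fin_two, hc] at this
    linarith
  rcases Int.eq_one_or_neg_one_of_mul_eq_one' had with ⟨ha, hd⟩ | ⟨ha, hd⟩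
  · left
    ext i j
    fin_cases i <;> fin_cases j <;> simp [ha, hc, hd, coe_T_zpow]
  · right
    ext i j
    fin_cases i <;> fin_cases j <;> simp [ha, hc, hd, coe_T_zpow]

theorem coe_S_mul_T_zpow_mul_S_inv (n : ℤ) : ↑(S * T ^ n * S⁻¹) = !![1, 0; -n, 1] := by
  rw [S_inv]
  ext i j
  fin_cases i <;> fin_cases j <;> simp [coe_T_zpow]

theorem T_zpow_mul_apply_zero_zero (n : ℤ) (g : SL(2, ℤ)) :
    (T ^ n * g) 0 0 = g 0 0 + n * g 1 0 := by
  simp [coe_T_zpow, vecMul, dotProduct, Fin.sum_univ_two]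

theorem T_zpow_mul_apply_one_zero (n : ℤ) (g : SL(2, ℤ)) : (T ^ n * g) 1 0 = g 1 0 :=
  congrFun (T_pow_mul_apply_one n g) 0

theorem S_mul_T_zpow_mul_S_inv_mul_apply_one_zero (n : ℤ) (g : SL(2, ℤ)) :
    (S * T ^ n * S⁻¹ * g) 1 0 = g 1 0 - n * g 0 0 := by
  change ((S * T ^ n * S⁻¹ : SL(2, ℤ)) * (g : Matrix (Fin 2) (Fin 2) ℤ)) 1 0 = _
  rw [coe_S_mul_T_zpow_mul_S_inv]
  simp [mul_apply, Fin.sum_univ_two]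
  ring

theorem mem_of_apply_one_zero_eq_zero {H : Subgroup SL(2, ℤ)} (hT : T ∈ H) (hneg : -1 ∈ H)
    {g : SL(2, ℤ)} (hc : g 1 0 = 0) : g ∈ H := by
  rcases eq_T_zpow_or_neg_T_zpow_of_apply_one_zero_eq_zero hc with hg | hg <;> rw [hg]
  · exact zpow_mem hT _
  · rw [← neg_one_mul]
    exact mul_mem hneg (zpow_mem hT _)

theorem Gamma0_two_le {H : Subgroup SL(2, ℤ)} (hT : T ∈ H) (hneg : -1 ∈ H)
    (hL : S * T ^ 2 * S⁻¹ ∈ H) : Gamma0 2 ≤ H := by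
  have hLΓ : S * T ^ 2 * S⁻¹ ∈ Gamma0 2 := by rw [Gamma0_mem]; decide
  have hTΓ : T ∈ Gamma0 2 := by rw [Gamma0_mem]; decide
  have hL_zpow (q : ℤ) : (S * T ^ 2 * S⁻¹) ^ q = S * T ^ (2 * q) * S⁻¹ := by
    rw [conj_zpow, ← zpow_natCast, ← _root_.zpow_mul, Nat.cast_ofNat]
  intro g hg
  induction hc : (g 1 0).natAbs using Nat.strong_induction_on generalizing g with
  | _ c ih =>
  rcases eq_or_ne (g 1 0) 0 with h0 | h0
  · exact mem_of_apply_one_zero_eq_zero hT hneg h0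
  obtain ⟨n, hn⟩ := Int.exists_two_mul_natAbs_sub_mul_le (g 0 0) h0
  set g₁ := T ^ (-n) * g with hg₁_def
  have hg₁ : g₁ ∈ Gamma0 2 := mul_mem (zpow_mem hTΓ _) hg
  have ha₁ : g₁ 0 0 ≠ 0 := apply_zero_zero_ne_zero_of_mem_Gamma0 (by norm_num) hg₁
  obtain ⟨q, hq⟩ := Int.exists_two_mul_natAbs_sub_mul_le (g₁ 1 0) (mul_ne_zero two_ne_zero ha₁)
  set g₂ := (S * T ^ 2 * S⁻¹) ^ q * g₁ with hg₂_def
  have hg₂ : g₂ ∈ Gamma0 2 := mul_mem (zpow_mem hLΓ _) hg₁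
  have hc₁ : g₁ 1 0 = g 1 0 := T_zpow_mul_apply_one_zero _ _
  have ha₁_eq : g₁ 0 0 = g 0 0 - n * g 1 0 := by
    rw [hg₁_def, T_zpow_mul_apply_zero_zero]; ring
  have hc₂ : g₂ 1 0 = g₁ 1 0 - q * (2 * g₁ 0 0) := by
    rw [hg₂_def, hL_zpow, S_mul_T_zpow_mul_S_inv_mul_apply_one_zero]; ring
  have hg₂H : g₂ ∈ H := ih _ (by omega) hg₂ rfl
  have : g = T ^ n * ((S * T ^ 2 * S⁻¹) ^ q)⁻¹ * g₂ := by rw [hg₂_def, hg₁_def]; group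
  rw [this]
  exact mul_mem (mul_mem (zpow_mem hT _) (inv_mem (zpow_mem hL _))) hg₂H

end ModularGroup

/-- `Γ₀(2)` is generated by `T`, `−I` and `TB`. -/
theorem closure_T_negI_TB_eq_gamma0_two :
    Subgroup.closure {Tz, negIz, TBz} = Gamma0 2 := by
  have hT : Tz = T := by decide
  have hneg : negIz = -1 := by decide
  have hTB : TBz = T * (S * T ^ 2 * S⁻¹) := by decide
  rw [hT, hneg, hTB]
  refine le_antisymm ((Subgroup.closure_le _).2 ?_) (Gamma0_two_le ?_ ?_ ?_)
  · rintro g (rfl | rfl | rfl) <;> (rw [SetLike.mem_coe, Gamma0_mem]; decide)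
  · exact Subgroup.subset_closure (by simp)
  · exact Subgroup.subset_closure (by simp)
  · rw [← inv_mul_cancel_left T (S * T ^ 2 * S⁻¹)]
    exact mul_mem (inv_mem (Subgroup.subset_closure (by simp)))
      (Subgroup.subset_closure (by simp))
end

section
/- Let d₁, d₂ be integers not divisible by 3. For j = 1, 2, let α_j, β_j ∈ 𝔽₃ and set M_j := α_j·I + β_j·[[0, (d_j − 1)·4⁻¹],[1, −1]] ∈ M₂(𝔽₃), where d_j is reduced mod 3 and 4⁻¹ = 1 in 𝔽₃. Assume det M₁ = det M₂ and this common determinant is nonzero (so M₁, M₂ ∈ GL₂(𝔽₃)). Then the pair (M₁, M₂) lies in the subgroup of GL₂(𝔽₃) × GL₂(𝔽₃) generated by the set {(u, v) : u, v ∈ N′} ∪ {(T, T)} ∪ {(D₀, D₀)}, where T := [[1,1],[0,1]] and D₀ := [[1,0],[0,−1]]. -/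
open Matrix MatrixGroups

/-- `SL₂(𝔽₃)`. -/
abbrev SL2F3 := Matrix.SpecialLinearGroup (Fin 2) (ZMod 3)

/-- The matrix `−I` in `SL₂(𝔽₃)`. -/
def negI : SL2F3 := ⟨!![-1, 0; 0, -1], by decide⟩

/-- The matrix `T = [[1,1],[0,1]]` in `SL₂(𝔽₃)`. -/
def Tmat : SL2F3 := ⟨!![1, 1; 0, 1], by decide⟩

/-- The subset `N′ = {I, −I} ∪ {g ∈ SL₂(𝔽₃) : tr(g) = 0}`. -/
def Nprime : Set SL2F3 :=
  {1, negI} ∪ {g : SL2F3 | Matrix.trace (g : Matrix (Fin 2) (Fin 2) (ZMod 3)) = 0}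

/-- `D₀ = [[1,0],[0,−1]]` as an element of `GL₂(𝔽₃)`. -/
def D0 : GL (Fin 2) (ZMod 3) :=
  Matrix.GeneralLinearGroup.mkOfDetNeZero !![1, 0; 0, -1] (by decide)

/-- The generating set `{(u, v) : u, v ∈ N′} ∪ {(T, T)} ∪ {(D₀, D₀)}` inside
`GL₂(𝔽₃) × GL₂(𝔽₃)`. -/
def genPairs : Set (GL (Fin 2) (ZMod 3) × GL (Fin 2) (ZMod 3)) :=
  {p | ∃ u ∈ Nprime, ∃ v ∈ Nprime,
      p = (Matrix.SpecialLinearGroup.toGL u, Matrix.SpecialLinearGroup.toGL v)}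
    ∪ {(Matrix.SpecialLinearGroup.toGL Tmat, Matrix.SpecialLinearGroup.toGL Tmat)}
    ∪ {(D0, D0)}

/-! `N′` is the quaternion group `Q₈ ⊴ GL₂(𝔽₃)`, and `GL₂(𝔽₃)/Q₈ ≅ S₃`. The matrix
`M = α + βX` (where `X² + X = (d - 1)/4`) lies in a Cartan subgroup (split for `d ≡ 1`,
non-split for `d ≡ 2 (mod 3)`), whose class modulo `Q₈` turns out to depend only on `det M`:
`M ∈ Q₈` when `det M = 1`, and `M ∈ Q₈ · T D₀` when `det M = -1`. Hence `(M₁, M₂)` is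
`(q₁, q₂)` or `(q₁, q₂) · (T, T) · (D₀, D₀)` with `q₁, q₂ ∈ Q₈`. -/

def IsNprimeMatrix (m : Matrix (Fin 2) (Fin 2) (ZMod 3)) : Prop :=
  m.det = 1 ∧ (m = 1 ∨ m = -1 ∨ m.trace = 0)

instance : DecidablePred IsNprimeMatrix := fun m => by
  unfold IsNprimeMatrix; infer_instance

lemma mem_Nprime_of_isNprimeMatrix {u : SL2F3} (hu : IsNprimeMatrix u) : u ∈ Nprime := by
  obtain ⟨-, h | h | h⟩ := hu
  · exact Or.inl (Or.inl (Subtype.ext h))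
  · exact Or.inl (Or.inr (Subtype.ext (h.trans (by decide))))
  · exact Or.inr h

lemma pair_mem_closure_genPairs_of_isNprimeMatrix {A B : Matrix (Fin 2) (Fin 2) (ZMod 3)}
    (hA : IsNprimeMatrix A) (hB : IsNprimeMatrix B) (hA₀ : A.det ≠ 0) (hB₀ : B.det ≠ 0) :
    (GeneralLinearGroup.mkOfDetNeZero A hA₀, GeneralLinearGroup.mkOfDetNeZero B hB₀)
      ∈ Subgroup.closure genPairs :=
  Subgroup.subset_closure <| Or.inl <| Or.inl
    ⟨⟨A, hA.1⟩, mem_Nprime_of_isNprimeMatrix hA, ⟨B, hB.1⟩, mem_Nprime_of_isNprimeMatrix hB,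
      Prod.ext (Units.ext rfl) (Units.ext rfl)⟩

lemma pair_mem_closure_genPairs_of_mul_TD0 {A B : Matrix (Fin 2) (Fin 2) (ZMod 3)}
    (hA : IsNprimeMatrix (A * (!![1, 1; 0, 1] * !![1, 0; 0, -1])))
    (hB : IsNprimeMatrix (B * (!![1, 1; 0, 1] * !![1, 0; 0, -1])))
    (hA₀ : A.det ≠ 0) (hB₀ : B.det ≠ 0) :
    (GeneralLinearGroup.mkOfDetNeZero A hA₀, GeneralLinearGroup.mkOfDetNeZero B hB₀)
      ∈ Subgroup.closure genPairs := by
  have hTD0_mul_self : (!![1, 1; 0, 1] * !![1, 0; 0, -1] : Matrix (Fin 2) (Fin 2) (ZMod 3))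
      * (!![1, 1; 0, 1] * !![1, 0; 0, -1]) = 1 := by decide
  have hval : ((SpecialLinearGroup.toGL Tmat * D0 : GL (Fin 2) (ZMod 3)) :
      Matrix (Fin 2) (Fin 2) (ZMod 3)) = !![1, 1; 0, 1] * !![1, 0; 0, -1] := rfl
  have hsplit : (GeneralLinearGroup.mkOfDetNeZero A hA₀, GeneralLinearGroup.mkOfDetNeZero B hB₀)
      = (GeneralLinearGroup.mkOfDetNeZero _ (hA.1 ▸ one_ne_zero),
          GeneralLinearGroup.mkOfDetNeZero _ (hB.1 ▸ one_ne_zero))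
        * ((SpecialLinearGroup.toGL Tmat, SpecialLinearGroup.toGL Tmat) * (D0, D0)) := by
    refine Prod.ext (Units.ext ?_) (Units.ext ?_) <;>
      simp only [Prod.fst_mul, Prod.snd_mul, Units.val_mul, hval,
        GeneralLinearGroup.val_mkOfDetNeZero, mul_assoc, hTD0_mul_self, mul_one]
  rw [hsplit]
  exact mul_mem (pair_mem_closure_genPairs_of_isNprimeMatrix hA hB _ _)
    (mul_mem (Subgroup.subset_closure (Or.inl (Or.inr rfl)))
      (Subgroup.subset_closure (Or.inr rfl)))

/-- The matrix of `α + βω`, where `ω² + ω = c`. -/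
def cartanMatrix (c α β : ZMod 3) : Matrix (Fin 2) (Fin 2) (ZMod 3) :=
  α • 1 + β • !![0, c; 1, -1]

lemma isNprimeMatrix_cartanMatrix_of_det_eq_one {c : ZMod 3} (hc : c ≠ -1) (α β : ZMod 3)
    (h : (cartanMatrix c α β).det = 1) : IsNprimeMatrix (cartanMatrix c α β) := by
  revert c α β; decide

lemma isNprimeMatrix_cartanMatrix_mul_TD0_of_det_eq_neg_one {c : ZMod 3} (hc : c ≠ -1)
    (α β : ZMod 3) (h : (cartanMatrix c α β).det = -1) :
    IsNprimeMatrix (cartanMatrix c α β * (!![1, 1; 0, 1] * !![1, 0; 0, -1])) := by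
  revert c α β; decide

lemma zmod_three_eq_one_or_eq_neg_one_of_ne_zero {x : ZMod 3} (hx : x ≠ 0) : x = 1 ∨ x = -1 := by
  revert x; decide

/-- Let `d₁, d₂` be integers not divisible by `3`, and for `j = 1, 2` let
`M_j := α_j·I + β_j·[[0, (d_j − 1)·4⁻¹],[1, −1]]` over `𝔽₃`. If `det M₁ = det M₂ ≠ 0`, then
the pair `(M₁, M₂)` lies in the subgroup of `GL₂(𝔽₃) × GL₂(𝔽₃)` generated by
`{(u, v) : u, v ∈ N′} ∪ {(T, T)} ∪ {(D₀, D₀)}`. -/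
theorem pair_mem_closure_genPairs (d₁ d₂ : ℤ) (h₁ : ¬ (3 : ℤ) ∣ d₁) (h₂ : ¬ (3 : ℤ) ∣ d₂)
    (α₁ β₁ α₂ β₂ : ZMod 3) (M₁ M₂ : Matrix (Fin 2) (Fin 2) (ZMod 3))
    (hM₁ : M₁ = α₁ • (1 : Matrix (Fin 2) (Fin 2) (ZMod 3))
        + β₁ • !![0, ((d₁ : ZMod 3) - 1) * (4 : ZMod 3)⁻¹; 1, -1])
    (hM₂ : M₂ = α₂ • (1 : Matrix (Fin 2) (Fin 2) (ZMod 3))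
        + β₂ • !![0, ((d₂ : ZMod 3) - 1) * (4 : ZMod 3)⁻¹; 1, -1])
    (hdet : M₁.det = M₂.det) (hne : M₁.det ≠ 0) :
    (Matrix.GeneralLinearGroup.mkOfDetNeZero M₁ hne,
      Matrix.GeneralLinearGroup.mkOfDetNeZero M₂ (hdet ▸ hne))
      ∈ Subgroup.closure genPairs := by
  have hc : ∀ d : ℤ, ¬ (3 : ℤ) ∣ d → (d : ZMod 3) - 1 ≠ -1 := fun d hd h =>
    hd <| (ZMod.intCast_zmod_eq_zero_iff_dvd d 3).1 (sub_eq_neg_self.1 h)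
  rw [show (4 : ZMod 3) = 1 by decide, inv_one, mul_one] at hM₁ hM₂
  change M₁ = cartanMatrix _ α₁ β₁ at hM₁
  change M₂ = cartanMatrix _ α₂ β₂ at hM₂
  subst hM₁ hM₂
  rcases zmod_three_eq_one_or_eq_neg_one_of_ne_zero hne with h | h
  · exact pair_mem_closure_genPairs_of_isNprimeMatrix
      (isNprimeMatrix_cartanMatrix_of_det_eq_one (hc d₁ h₁) α₁ β₁ h)
      (isNprimeMatrix_cartanMatrix_of_det_eq_one (hc d₂ h₂) α₂ β₂ (hdet ▸ h)) _ _
  · exact pair_mem_closure_genPairs_of_mul_TD0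
      (isNprimeMatrix_cartanMatrix_mul_TD0_of_det_eq_neg_one (hc d₁ h₁) α₁ β₁ h)
      (isNprimeMatrix_cartanMatrix_mul_TD0_of_det_eq_neg_one (hc d₂ h₂) α₂ β₂ (hdet ▸ h)) _ _
end
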